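/- arXiv:1512.07467 — 6 statements merged into one kernel-verified Lean document; each statement's English description precedes it below -/
import Mathlib

section
/- Let q ≥ 2 be a prime power, n ≥ 2 with n not divisible by 3, and i with gcd(i, 2n) = 1 and gcd(i, 3n) = 3. Let a ∈ GF(q^{3n})* with N_{q^{3n}/q^3}(a) ∉ F_q, and let ω ∈ GF(q^{2n}) \ GF(q^n). Then the F_q-linear set L_U = { GF(q^{2n})·(a x^{q^i} + xω) : x ∈ GF(q^{3n})* } in PG(2, q^{2n}) = PG(GF(q^{6n}), GF(q^{2n})) is scattered of rank 3n. -/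
/-!
Write `σ` for `x ↦ x ^ q ^ i` and `x̄ = x ^ q ^ n` on GF(q^{2n}). The map `x ↦ a x^σ + x ω` is
injective on GF(q^{3n}): a nonzero kernel element `d` gives `ω = -a d^σ / d ∈ GF(q^{3n})`, so `ω`
would lie in GF(q^{2n}) ∩ GF(q^{3n}) = GF(q^n).

For scatteredness, let `v = λ u` with `u = a x^σ + x ω`, `v = a y^σ + y ω`. Raising to the power
`q^{3n}`, which acts as conjugation on GF(q^{2n}), gives the same equation with `ω̄, λ̄`.
If `λ̄ = λ` the two equations force `y = λ x` and `λ^σ = λ`, so `λ ∈ GF(q^{gcd(i,n)}) = F_q`. Otherwise they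
show that `z = a s x^σ / x`, with `s = (λ - λ̄) / (ω - ω̄) ∈ GF(q^n)^*`, is a root of
`X^{σ+1} + b X + c` with `b, c ∈ GF(q^n)`. Its conjugates over GF(q^n) are roots too, and two
distinct roots `g, h` satisfy `g h (g - h)^σ = c (g - h)`. As `3 ∣ i`, the norm
`N = N_{q^{3n}/q^3}` is `σ`-invariant, so `N(g) N(h) = N(c)`. Hence `N(z)` is fixed by
`x ↦ x ^ q ^ (2n)` as well as by `x ↦ x ^ q ^ 3`, so `N(z) ∈ F_q` because `gcd(2n, 3) = 1`. The same
holds for `N(s)`, and `N(z) = N(a) N(s)` then puts `N(a)` in `F_q`.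
-/

open Function

section Monoid

variable {M : Type*} [Monoid M] {x : M}

theorem isPeriodicPt_pow_iff {q k : ℕ} : IsPeriodicPt (· ^ q) k x ↔ x ^ q ^ k = x := by
  rw [IsPeriodicPt, IsFixedPt, pow_iterate]

theorem pow_pow_gcd_eq_self {q a b : ℕ} (ha : x ^ q ^ a = x) (hb : x ^ q ^ b = x) :
    x ^ q ^ a.gcd b = x :=
  isPeriodicPt_pow_iff.1 <| (isPeriodicPt_pow_iff.2 ha).gcd (isPeriodicPt_pow_iff.2 hb)

theorem pow_pow_mul_eq_self {q a : ℕ} (ha : x ^ q ^ a = x) (k : ℕ) : x ^ q ^ (k * a) = x :=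
  isPeriodicPt_pow_iff.1 <| (isPeriodicPt_pow_iff.2 ha).const_mul k

theorem pow_add_sub_one_eq_pow {N a : ℕ} (hx : x ^ N = x) (ha : a ≠ 0) :
    x ^ (a + (N - 1)) = x ^ a := by
  rcases Nat.eq_zero_or_pos N with rfl | hN
  · simp
  · rw [show a + (N - 1) = a - 1 + N by omega, pow_add, hx, ← pow_succ, Nat.sub_add_cancel
      (Nat.one_le_iff_ne_zero.2 ha)]

-- `finNorm Q n` is the norm from GF(Q ^ n) to GF(Q), on the elements with `x ^ Q ^ n = x`.
def finNorm (Q n : ℕ) (x : M) : M := x ^ ((Q ^ n - 1) / (Q - 1))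

theorem finNorm_pow_eq_self {Q n : ℕ} (hx : x ^ Q ^ n = x) :
    finNorm Q n x ^ Q = finNorm Q n x := by
  unfold finNorm
  set e := (Q ^ n - 1) / (Q - 1) with he_def
  rcases eq_or_ne e 0 with he | he
  · simp [he]
  have hQ : 1 ≤ Q := by
    by_contra! h
    exact he (by simp [he_def, Nat.lt_one_iff.1 h])
  have hmul : e * (Q - 1) = Q ^ n - 1 :=
    Nat.div_mul_cancel (by simpa using Nat.sub_dvd_pow_sub_pow Q 1 n)
  have hexp : e * Q = e + (Q ^ n - 1) := by
    rw [← hmul]; zify [hQ]; ring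
  rw [← pow_mul, hexp, pow_add_sub_one_eq_pow hx he]

theorem finNorm_pow (Q n k : ℕ) (x : M) : finNorm Q n (x ^ k) = finNorm Q n x ^ k :=
  pow_right_comm _ _ _

theorem finNorm_pow_pow {Q n : ℕ} (hx : x ^ Q ^ n = x) (j : ℕ) :
    finNorm Q n (x ^ Q ^ j) = finNorm Q n x := by
  rw [finNorm_pow, ← mul_one j]
  exact pow_pow_mul_eq_self (by simpa using finNorm_pow_eq_self hx) j

theorem finNorm_pow_eq_self_of_coprime {q n k : ℕ} (hk : k.Coprime n) (hx : x ^ q ^ n = x) :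
    finNorm (q ^ k) n x ^ q = finNorm (q ^ k) n x := by
  have hk' : finNorm (q ^ k) n x ^ q ^ k = finNorm (q ^ k) n x :=
    finNorm_pow_eq_self (by rw [← pow_mul]; exact pow_pow_mul_eq_self hx k)
  have hn' : finNorm (q ^ k) n x ^ q ^ n = finNorm (q ^ k) n x := by rw [← finNorm_pow, hx]
  simpa [hk.gcd_eq_one] using pow_pow_gcd_eq_self hk' hn'

end Monoid

theorem finNorm_ne_zero {M₀ : Type*} [MonoidWithZero M₀] [NoZeroDivisors M₀] {x : M₀}
    (Q n : ℕ) (hx : x ≠ 0) : finNorm Q n x ≠ 0 :=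
  pow_ne_zero _ hx

theorem finNorm_mul {M : Type*} [CommMonoid M] (Q n : ℕ) (x y : M) :
    finNorm Q n (x * y) = finNorm Q n x * finNorm Q n y :=
  mul_pow _ _ _

theorem finNorm_div {M : Type*} [DivisionCommMonoid M] (Q n : ℕ) (x y : M) :
    finNorm Q n (x / y) = finNorm Q n x / finNorm Q n y :=
  div_pow _ _ _

def IsExpCharPow (K : Type*) [Semiring K] (q : ℕ) : Prop := ∃ p m : ℕ, ExpChar K p ∧ q = p ^ m

namespace IsExpCharPow

variable {K : Type*} {q : ℕ}

theorem pow [Semiring K] (hq : IsExpCharPow K q) (j : ℕ) : IsExpCharPow K (q ^ j) := by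
  obtain ⟨p, m, hp, rfl⟩ := hq
  exact ⟨p, m * j, hp, (pow_mul p m j).symm⟩

theorem ne_zero [Semiring K] (hq : IsExpCharPow K q) : q ≠ 0 := by
  obtain ⟨p, m, hp, rfl⟩ := hq
  exact pow_ne_zero m (expChar_pos K p).ne'

theorem add_pow [CommSemiring K] (hq : IsExpCharPow K q) (x y : K) :
    (x + y) ^ q = x ^ q + y ^ q := by
  obtain ⟨p, m, hp, rfl⟩ := hq
  exact add_pow_expChar_pow x y p m

theorem sub_pow [CommRing K] (hq : IsExpCharPow K q) (x y : K) :
    (x - y) ^ q = x ^ q - y ^ q := by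
  obtain ⟨p, m, hp, rfl⟩ := hq
  exact sub_pow_expChar_pow x y m

theorem pow_injective [CommRing K] [IsReduced K] (hq : IsExpCharPow K q) :
    Injective (· ^ q : K → K) := by
  obtain ⟨p, m, hp, rfl⟩ := hq
  exact fun x y h => iterateFrobenius_inj K p m (by simpa [iterateFrobenius_def] using h)

theorem of_card [Field K] [Fintype K] (hq : IsPrimePow q) {k : ℕ} (hK : Nat.card K = q ^ k) :
    IsExpCharPow K q := by
  obtain ⟨p, m, hp, -, rfl⟩ := hq
  have : Fact p.Prime := ⟨hp.nat_prime⟩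
  have : CharP K p := charP_of_card_eq_prime_pow (f := m * k) (by
    rw [← Nat.card_eq_fintype_card, hK, pow_mul])
  exact ⟨p, m, inferInstance, rfl⟩

end IsExpCharPow

theorem FiniteField.natCard_setOf_pow_eq_self {K : Type*} [Field K] [Finite K] {Q : ℕ}
    (hQ : Q - 1 ∣ Nat.card K - 1) : Nat.card {x : K | x ^ Q = x} = Q := by
  have hQ0 : Q - 1 ≠ 0 := by
    rintro h
    rw [h, zero_dvd_iff] at hQ
    have := Finite.one_lt_card (α := K)
    omega
  have hset : {x : K | x ^ Q = x} =
      insert 0 (Units.val '' ((powMonoidHom (Q - 1) : Kˣ →* Kˣ).ker : Set Kˣ)) := by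
    ext x
    simp only [Set.mem_ofPred_eq, Set.mem_insert_iff, Set.mem_image, SetLike.mem_coe,
      MonoidHom.mem_ker, powMonoidHom_apply]
    constructor
    · intro hx
      refine or_iff_not_imp_left.2 fun hx0 => ⟨Units.mk0 x hx0, Units.ext ?_, rfl⟩
      refine mul_right_cancel₀ hx0 ?_
      rw [Units.val_pow_eq_pow_val, Units.val_mk0, Units.val_one, one_mul, ← pow_succ,
        Nat.sub_add_cancel (by omega), hx]
    · rintro (rfl | ⟨u, hu, rfl⟩)
      · exact zero_pow (by omega)
      · rw [← Units.val_pow_eq_pow_val, ← Nat.sub_add_cancel (show 1 ≤ Q by omega), pow_succ, hu,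
          one_mul]
  have h0 : (0 : K) ∉ Units.val '' ((powMonoidHom (Q - 1) : Kˣ →* Kˣ).ker : Set Kˣ) := by
    rintro ⟨u, -, hu⟩
    exact u.ne_zero hu
  rw [hset, Nat.card_coe_set_eq, Set.ncard_insert_of_notMem h0,
    Set.ncard_image_of_injective _ Units.val_injective, ← Nat.card_coe_set_eq,
    SetLike.coe_sort_coe, IsCyclic.card_powMonoidHom_ker, Nat.card_units, Nat.gcd_eq_right hQ]
  omega

section Field

variable {K : Type*} [Field K]

theorem injOn_mul_pow_add_mul {q i N M : ℕ} (hq : IsExpCharPow K q) {a ω : K}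
    (ha : a ^ q ^ N = a) (hω : ω ^ q ^ M = ω) (hωN : ω ^ q ^ N.gcd M ≠ ω) :
    Set.InjOn (fun x => a * x ^ q ^ i + x * ω) {x | x ^ q ^ N = x} := by
  intro x hx y hy hxy
  by_contra hne
  set d := x - y
  have hd0 : d ≠ 0 := sub_ne_zero.2 hne
  have hd : d ^ q ^ N = d := by simp only [d, (hq.pow N).sub_pow, hx.out, hy.out]
  have hker : a * d ^ q ^ i + ω * d = 0 := by
    simp only [d, (hq.pow i).sub_pow]; linear_combination hxy
  have hkerN : a * d ^ q ^ i + ω ^ q ^ N * d = 0 := by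
    have := congrArg (· ^ q ^ N) hker
    simpa [(hq.pow N).add_pow, mul_pow, pow_right_comm d (q ^ i), ha, hd,
      zero_pow (hq.pow N).ne_zero] using this
  have hωN' : ω ^ q ^ N = ω := mul_right_cancel₀ hd0 (by linear_combination hkerN - hker)
  exact hωN (pow_pow_gcd_eq_self hωN' hω)

theorem sub_div_sub_pow_eq_self {Q : ℕ} (hQ : IsExpCharPow K Q) {α β γ δ : K}
    (hα : α ^ Q = β) (hβ : β ^ Q = α) (hγ : γ ^ Q = δ) (hδ : δ ^ Q = γ) :
    ((α - β) / (γ - δ)) ^ Q = (α - β) / (γ - δ) := by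
  rw [div_pow, hQ.sub_pow, hQ.sub_pow, hα, hβ, hγ, hδ, ← neg_sub α, ← neg_sub γ, neg_div_neg_eq]

theorem pow_mul_add_mul_add_eq_zero_pow {Q σ : ℕ} (hQ : IsExpCharPow K Q) {z b c : K}
    (hb : b ^ Q = b) (hc : c ^ Q = c) (h : z ^ σ * z + b * z + c = 0) :
    (z ^ Q) ^ σ * z ^ Q + b * z ^ Q + c = 0 := by
  have := congrArg (· ^ Q) h
  simpa [hQ.add_pow, mul_pow, pow_right_comm z σ Q, hb, hc, zero_pow hQ.ne_zero] using this

theorem finNorm_mul_finNorm_eq_of_roots {q n i : ℕ} (hq : IsExpCharPow K q) (h3i : 3 ∣ i)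
    {g h b c : K} (hgh : g ≠ h) (hg : g ^ q ^ (3 * n) = g) (hh : h ^ q ^ (3 * n) = h)
    (hgr : g ^ q ^ i * g + b * g + c = 0) (hhr : h ^ q ^ i * h + b * h + c = 0) :
    finNorm (q ^ 3) n g * finNorm (q ^ 3) n h = finNorm (q ^ 3) n c := by
  have hd : (g - h) ^ (q ^ 3) ^ n = g - h := by rw [← pow_mul, (hq.pow _).sub_pow, hg, hh]
  have key : g * h * (g - h) ^ q ^ i = c * (g - h) := by
    rw [(hq.pow i).sub_pow]; linear_combination h * hgr - g * hhr
  obtain ⟨j, rfl⟩ := h3i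
  have := congrArg (finNorm (q ^ 3) n) key
  rw [finNorm_mul, finNorm_mul, finNorm_mul, pow_mul, finNorm_pow_pow hd] at this
  exact mul_right_cancel₀ (finNorm_ne_zero _ _ (sub_ne_zero.2 hgh)) this

theorem finNorm_pow_eq_self_of_root {q n i : ℕ} (hq : IsExpCharPow K q) (hn3 : ¬ 3 ∣ n)
    (h3i : 3 ∣ i) {z b c : K} (hz : z ^ q ^ (3 * n) = z) (hb : b ^ q ^ n = b) (hc : c ^ q ^ n = c)
    (hroot : z ^ q ^ i * z + b * z + c = 0) :
    finNorm (q ^ 3) n z ^ q = finNorm (q ^ 3) n z := by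
  have hcop : Nat.Coprime 3 n := (Nat.Prime.coprime_iff_not_dvd Nat.prime_three).2 hn3
  by_cases hzn : z ^ q ^ n = z
  · exact finNorm_pow_eq_self_of_coprime hcop hzn
  have h3 : finNorm (q ^ 3) n z ^ q ^ 3 = finNorm (q ^ 3) n z :=
    finNorm_pow_eq_self (by rwa [← pow_mul])
  suffices h2n : finNorm (q ^ 3) n z ^ q ^ (2 * n) = finNorm (q ^ 3) n z by
    have hcop' : Nat.Coprime 3 (2 * n) :=
      Nat.Coprime.mul_right (by norm_num) hcop
    simpa [hcop'.gcd_eq_one] using pow_pow_gcd_eq_self h3 h2n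
  set z₁ := z ^ q ^ n
  set z₂ := z₁ ^ q ^ n
  have hr₁ := pow_mul_add_mul_add_eq_zero_pow (hq.pow n) hb hc hroot
  have hr₂ := pow_mul_add_mul_add_eq_zero_pow (hq.pow n) hb hc hr₁
  have hz₁ : z₁ ^ q ^ (3 * n) = z₁ := by rw [pow_right_comm, hz]
  have hz₂ : z₂ ^ q ^ (3 * n) = z₂ := by rw [pow_right_comm, hz₁]
  have hz₁z₂ : z₁ ≠ z₂ := fun h => hzn ((hq.pow n).pow_injective h).symm
  have hN₁ : finNorm (q ^ 3) n z₁ ≠ 0 := by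
    refine finNorm_ne_zero _ _ fun h => hzn ?_
    rw [h, eq_comm]
    exact (pow_eq_zero_iff (hq.pow n).ne_zero).1 h
  have e₁ := finNorm_mul_finNorm_eq_of_roots hq h3i (Ne.symm hzn) hz hz₁ hroot hr₁
  have e₂ := finNorm_mul_finNorm_eq_of_roots hq h3i hz₁z₂ hz₁ hz₂ hr₁ hr₂
  have hzz₂ : finNorm (q ^ 3) n z = finNorm (q ^ 3) n z₂ :=
    mul_left_cancel₀ hN₁ (by rw [mul_comm, e₁, e₂])
  calc finNorm (q ^ 3) n z ^ q ^ (2 * n) = finNorm (q ^ 3) n (z ^ q ^ (2 * n)) :=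
        (finNorm_pow _ _ _ _).symm
    _ = finNorm (q ^ 3) n z₂ := by rw [two_mul, pow_add, pow_mul]
    _ = finNorm (q ^ 3) n z := hzz₂.symm

theorem pow_mul_add_mul_add_eq_zero_of_eq {σ : ℕ} (hσ : IsExpCharPow K σ) {a x y s t A r : K}
    (hx0 : x ≠ 0) (hy : y = s * (a * x ^ σ) + t * x)
    (hay : a * y ^ σ = A * (a * x ^ σ) - r * s * x) :
    (a * s * x ^ σ / x) ^ σ * (a * s * x ^ σ / x) + (t ^ σ - A) * (a * s * x ^ σ / x)
      + r * s ^ 2 = 0 := by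
  set z := a * s * x ^ σ / x
  have hz : z * x = a * s * x ^ σ := div_mul_cancel₀ _ hx0
  have hzσ : z ^ σ * x ^ σ = a ^ σ * s ^ σ * (x ^ σ) ^ σ := by rw [← mul_pow, hz, mul_pow, mul_pow]
  have hyσ : y ^ σ = s ^ σ * (a ^ σ * (x ^ σ) ^ σ) + t ^ σ * x ^ σ := by
    rw [hy, hσ.add_pow, mul_pow, mul_pow, mul_pow]
  refine (mul_eq_zero.1 ?_).resolve_right (mul_ne_zero hx0 (pow_ne_zero σ hx0))
  linear_combination (z * x) * hzσ + (a ^ σ * s ^ σ * (x ^ σ) ^ σ + (t ^ σ - A) * x ^ σ) * hz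
    + (s * x ^ σ) * hay - (s * x ^ σ * a) * hyσ

theorem finNorm_mul_pow_div {q n i : ℕ} (h3i : 3 ∣ i) {a s x : K} (hx : x ^ q ^ (3 * n) = x)
    (hx0 : x ≠ 0) :
    finNorm (q ^ 3) n (a * s * x ^ q ^ i / x) = finNorm (q ^ 3) n a * finNorm (q ^ 3) n s := by
  obtain ⟨j, rfl⟩ := h3i
  rw [pow_mul] at hx
  rw [finNorm_div, finNorm_mul, finNorm_mul, pow_mul, finNorm_pow_pow hx,
    mul_div_cancel_right₀ _ (finNorm_ne_zero _ _ hx0)]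

theorem pow_eq_self_of_conj_eq {q n i : ℕ} (hin : i.Coprime n) {a ω l x y : K} (ha0 : a ≠ 0)
    (hωn : ω ^ q ^ n ≠ ω) (hln : l ^ q ^ n = l) (hx0 : x ≠ 0)
    (E : a * y ^ q ^ i + y * ω = l * (a * x ^ q ^ i + x * ω))
    (E' : a * y ^ q ^ i + y * ω ^ q ^ n = l ^ q ^ n * (a * x ^ q ^ i + x * ω ^ q ^ n)) :
    l ^ q = l := by
  rw [hln] at E'
  have hy : y = l * x :=
    mul_right_cancel₀ (sub_ne_zero.2 (Ne.symm hωn)) (by linear_combination E - E')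
  rw [hy, mul_pow] at E
  have hli : l ^ q ^ i = l :=
    mul_right_cancel₀ (mul_ne_zero ha0 (pow_ne_zero (q ^ i) hx0)) (by linear_combination E)
  simpa [hin.gcd_eq_one] using pow_pow_gcd_eq_self hli hln

theorem finNorm_pow_eq_self_of_conj_ne {q n i : ℕ} (hq : IsExpCharPow K q) (hn3 : ¬ 3 ∣ n)
    (h3i : 3 ∣ i) {a ω l x y : K} (ha : a ^ q ^ (3 * n) = a) (hω : ω ^ q ^ (2 * n) = ω)
    (hωn : ω ^ q ^ n ≠ ω) (hl : l ^ q ^ (2 * n) = l) (hln : l ^ q ^ n ≠ l)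
    (hx : x ^ q ^ (3 * n) = x) (hx0 : x ≠ 0)
    (E : a * y ^ q ^ i + y * ω = l * (a * x ^ q ^ i + x * ω))
    (E' : a * y ^ q ^ i + y * ω ^ q ^ n = l ^ q ^ n * (a * x ^ q ^ i + x * ω ^ q ^ n)) :
    finNorm (q ^ 3) n a ^ q = finNorm (q ^ 3) n a := by
  set ω' := ω ^ q ^ n
  set l' := l ^ q ^ n
  have hδ : ω - ω' ≠ 0 := sub_ne_zero.2 (Ne.symm hωn)
  have hω' : ω' ^ q ^ n = ω := by rw [← pow_mul, ← pow_add, ← two_mul, hω]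
  have hl' : l' ^ q ^ n = l := by rw [← pow_mul, ← pow_add, ← two_mul, hl]
  set s := (l - l') / (ω - ω')
  set t := (l * ω - l' * ω') / (ω - ω')
  set A := (l' * ω - l * ω') / (ω - ω')
  have hs : s ^ q ^ n = s := sub_div_sub_pow_eq_self (hq.pow n) rfl hl' rfl hω'
  have ht : t ^ q ^ n = t := sub_div_sub_pow_eq_self (hq.pow n) (mul_pow _ _ _)
    (by rw [mul_pow, hl', hω']) rfl hω'
  have hA : A ^ q ^ n = A := sub_div_sub_pow_eq_self (hq.pow n) (by rw [mul_pow, hl'])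
    (by rw [mul_pow, hω']) rfl hω'
  have hsδ : s * (ω - ω') = l - l' := div_mul_cancel₀ _ hδ
  have htδ : t * (ω - ω') = l * ω - l' * ω' := div_mul_cancel₀ _ hδ
  have hAδ : A * (ω - ω') = l' * ω - l * ω' := div_mul_cancel₀ _ hδ
  have hy : y = s * (a * x ^ q ^ i) + t * x := mul_right_cancel₀ hδ <| by
    linear_combination E - E' - (a * x ^ q ^ i) * hsδ - x * htδ
  have hay : a * y ^ q ^ i = A * (a * x ^ q ^ i) - ω * ω' * s * x := mul_right_cancel₀ hδ <| by
    linear_combination ω * E' - ω' * E - (a * x ^ q ^ i) * hAδ + (ω * ω' * x) * hsδ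
  have hroot := pow_mul_add_mul_add_eq_zero_of_eq (hq.pow i) hx0 hy hay
  have hz : (a * s * x ^ q ^ i / x) ^ q ^ (3 * n) = a * s * x ^ q ^ i / x := by
    rw [div_pow, mul_pow, mul_pow, ha, hx, pow_right_comm, hx, pow_pow_mul_eq_self hs 3]
  have hNz := finNorm_pow_eq_self_of_root hq hn3 h3i hz
    (by rw [(hq.pow n).sub_pow, pow_right_comm, ht, hA])
    (by rw [mul_pow, mul_pow, hω', mul_comm ω', ← pow_mul, mul_comm 2, pow_mul, hs]) hroot
  have hNs := finNorm_pow_eq_self_of_coprime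
    ((Nat.Prime.coprime_iff_not_dvd Nat.prime_three).2 hn3) hs
  have hNs0 : finNorm (q ^ 3) n s ≠ 0 :=
    finNorm_ne_zero _ _ (div_ne_zero (sub_ne_zero.2 (Ne.symm hln)) hδ)
  rw [finNorm_mul_pow_div h3i hx hx0, mul_pow, hNs] at hNz
  exact mul_right_cancel₀ hNs0 hNz

theorem pow_eq_self_of_eq_mul {q n i : ℕ} (hq : IsExpCharPow K q)
    (hn3 : ¬ 3 ∣ n) (hin : i.Coprime n) (h3i : 3 ∣ i) {a ω l x y : K}
    (ha : a ^ q ^ (3 * n) = a) (ha0 : a ≠ 0)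
    (hnorm : finNorm (q ^ 3) n a ^ q ≠ finNorm (q ^ 3) n a)
    (hω : ω ^ q ^ (2 * n) = ω) (hωn : ω ^ q ^ n ≠ ω) (hl : l ^ q ^ (2 * n) = l)
    (hx : x ^ q ^ (3 * n) = x) (hx0 : x ≠ 0) (hy : y ^ q ^ (3 * n) = y)
    (E : a * y ^ q ^ i + y * ω = l * (a * x ^ q ^ i + x * ω)) : l ^ q = l := by
  have hconj : ∀ w : K, w ^ q ^ (2 * n) = w → w ^ q ^ (3 * n) = w ^ q ^ n := fun w hw => by
    rw [show 3 * n = 2 * n + n by ring, pow_add, pow_mul, hw]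
  have E' : a * y ^ q ^ i + y * ω ^ q ^ n = l ^ q ^ n * (a * x ^ q ^ i + x * ω ^ q ^ n) := by
    have := congrArg (· ^ q ^ (3 * n)) E
    simp only [(hq.pow _).add_pow, mul_pow] at this
    rwa [pow_right_comm x, pow_right_comm y, ha, hx, hy, hconj ω hω, hconj l hl] at this
  by_cases hln : l ^ q ^ n = l
  · exact pow_eq_self_of_conj_eq hin ha0 hωn hln hx0 E E'
  · exact absurd (finNorm_pow_eq_self_of_conj_ne hq hn3 h3i ha hω hωn hl hln hx hx0 E E') hnorm

end Field

theorem stmt5_general (q n i : ℕ) (hq : IsPrimePow q) (hn3 : ¬ (3 ∣ n))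
    (hi1 : Nat.gcd i (2 * n) = 1) (hi2 : Nat.gcd i (3 * n) = 3)
    (K : Type*) [Field K] [Fintype K] (hK : Nat.card K = q ^ (6 * n))
    (a : K) (ha : a ^ q ^ (3 * n) = a) (ha0 : a ≠ 0)
    (hnorm : ¬ ((a ^ ((q ^ (3 * n) - 1) / (q ^ 3 - 1))) ^ q
        = a ^ ((q ^ (3 * n) - 1) / (q ^ 3 - 1))))
    (ω : K) (hω1 : ω ^ q ^ (2 * n) = ω) (hω2 : ω ^ q ^ n ≠ ω)
    (U : Set K)
    (hU : U = {z : K | ∃ x : K, x ^ q ^ (3 * n) = x ∧ z = a * x ^ q ^ i + x * ω}) :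
    Nat.card U = q ^ (3 * n) ∧
    (∀ u ∈ U, u ≠ 0 → ∀ v ∈ U, v ≠ 0 → ∀ l : K,
        l ^ q ^ (2 * n) = l → v = l * u → l ^ q = l) := by
  have hqK : IsExpCharPow K q := .of_card hq hK
  have hnorm' : finNorm (q ^ 3) n a ^ q ≠ finNorm (q ^ 3) n a := by
    rwa [finNorm, ← pow_mul q 3 n]
  have hUimg : U = (fun x => a * x ^ q ^ i + x * ω) '' {x | x ^ q ^ (3 * n) = x} := by
    ext z
    simp [hU, eq_comm]
  constructor
  · have hF : Nat.card {x : K | x ^ q ^ (3 * n) = x} = q ^ (3 * n) :=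
      FiniteField.natCard_setOf_pow_eq_self <| by
        rw [hK, show 6 * n = 3 * n * 2 by ring, pow_mul q (3 * n) 2]
        simpa only [one_pow] using Nat.sub_dvd_pow_sub_pow (q ^ (3 * n)) 1 2
    have hωn : ω ^ q ^ (3 * n).gcd (2 * n) ≠ ω := by
      rwa [Nat.gcd_mul_right, show Nat.gcd 3 2 = 1 by norm_num, one_mul]
    rw [hUimg, Nat.card_image_of_injOn (injOn_mul_pow_add_mul hqK ha hω1 hωn), hF]
  · rw [hUimg]
    rintro _ ⟨x, hx, rfl⟩ hu0 _ ⟨y, hy, rfl⟩ - l hl hvl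
    have hx0 : x ≠ 0 := by
      rintro rfl
      simp [zero_pow (hqK.pow i).ne_zero] at hu0
    exact pow_eq_self_of_eq_mul hqK hn3 (Nat.Coprime.coprime_dvd_right (dvd_mul_left n 2) hi1)
      (hi2 ▸ Nat.gcd_dvd_left i (3 * n)) ha ha0 hnorm' hω1 hω2 hl hx hx0 hy hvl

/-- Theorem 3.3 of the paper, monomial case: for 3 ∤ n,
gcd(i,2n) = 1, gcd(i,3n) = 3 and a ∈ GF(q^{3n})* with N_{q^{3n}/q^3}(a) ∉ F_q,
the set L_U = { GF(q^{2n})·(a x^{q^i} + xω) } is a scattered F_q-linear set of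
rank 3n of PG(2, q^{2n}) = PG(GF(q^{6n}), GF(q^{2n})). -/
theorem stmt5 (q n i : ℕ) (hq : IsPrimePow q) (hn : 2 ≤ n) (hn3 : ¬ (3 ∣ n))
    (hi1 : Nat.gcd i (2 * n) = 1) (hi2 : Nat.gcd i (3 * n) = 3)
    (K : Type*) [Field K] [Fintype K] (hK : Nat.card K = q ^ (6 * n))
    (a : K) (ha : a ^ q ^ (3 * n) = a) (ha0 : a ≠ 0)
    (hnorm : ¬ ((a ^ ((q ^ (3 * n) - 1) / (q ^ 3 - 1))) ^ q
        = a ^ ((q ^ (3 * n) - 1) / (q ^ 3 - 1))))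
    (ω : K) (hω1 : ω ^ q ^ (2 * n) = ω) (hω2 : ω ^ q ^ n ≠ ω)
    (U : Set K)
    (hU : U = {z : K | ∃ x : K, x ^ q ^ (3 * n) = x ∧ z = a * x ^ q ^ i + x * ω}) :
    Nat.card U = q ^ (3 * n) ∧
    (∀ u ∈ U, u ≠ 0 → ∀ v ∈ U, v ≠ 0 → ∀ l : K,
        l ^ q ^ (2 * n) = l → v = l * u → l ^ q = l) :=
  stmt5_general q n i hq hn3 hi1 hi2 K hK a ha ha0 hnorm ω hω1 hω2 U hU
end

section
/- Let q be a prime power and φ(x) = Σ_{i=0}^{3n-1} a_i x^{q^i} an F_q-linear map of GF(q^{3n}), with adjoint φ̄(x) = Σ_{i=0}^{3n-1} a_i^{q^{3n-i}} x^{q^{3n-i}} with respect to the bilinear form <x,y> = Tr_{q^{3n}/q}(xy). Then the maps x ↦ φ(x)/x and x ↦ φ̄(x)/x, defined on GF(q^{3n})*, have the same image. -/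
/-!
A value `z` lies in the image of `x ↦ φ(x)/x` iff `φ - z` has a nonzero kernel. The maps
`φ - z` and `φ̄ - z` are adjoint for the nondegenerate form `Tr_{K/𝔽_p}(xy)`: the trace is
invariant under `x ↦ x ^ p`, and `x ^ q ^ N = x` moves each Frobenius twist from `x` onto `y`.
On a finite space an additive map is injective iff it is surjective, so an endomorphism is
injective iff its adjoint is.
-/

open Finset

theorem AddMonoidHom.not_injective_iff {M N : Type*} [AddGroup M] [AddGroup N] (f : M →+ N) :
    ¬Function.Injective f ↔ ∃ x, x ≠ 0 ∧ f x = 0 := by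
  simp only [injective_iff_map_eq_zero, not_forall, exists_prop, and_comm]

theorem exists_ne_zero_eq_div_iff {G₀ : Type*} [GroupWithZero G₀] (f : G₀ → G₀) (z : G₀) :
    (∃ x, x ≠ 0 ∧ z = f x / x) ↔ ∃ x, x ≠ 0 ∧ f x = z * x :=
  exists_congr fun x => and_congr_right fun hx => by rw [eq_div_iff hx, eq_comm]

section
variable {K : Type*} [Field K]

def qPoly (q N : ℕ) (a : ℕ → K) (x : K) : K :=
  ∑ i ∈ range N, a i * x ^ q ^ i

def qPolyAdjoint (q N : ℕ) (a : ℕ → K) (x : K) : K :=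
  ∑ i ∈ range N, a i ^ q ^ (N - i) * x ^ q ^ (N - i)

variable [Fintype K] {p : ℕ} [Fact p.Prime] [Algebra (ZMod p) K]

theorem frobeniusAlgEquivOfAlgebraic_pow_apply (t : ℕ) (x : K) :
    (FiniteField.frobeniusAlgEquivOfAlgebraic (ZMod p) K ^ t) x = x ^ p ^ t := by
  rw [AlgEquiv.coe_pow, FiniteField.coe_frobeniusAlgEquivOfAlgebraic_iterate, ZMod.card]

theorem add_pow_prime_pow (t : ℕ) (x y : K) : (x + y) ^ p ^ t = x ^ p ^ t + y ^ p ^ t := by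
  simp only [← frobeniusAlgEquivOfAlgebraic_pow_apply, map_add]

theorem trace_pow_prime_pow (t : ℕ) (x : K) :
    Algebra.trace (ZMod p) K (x ^ p ^ t) = Algebra.trace (ZMod p) K x := by
  rw [← frobeniusAlgEquivOfAlgebraic_pow_apply, Algebra.trace_eq_of_algEquiv]

theorem eq_zero_of_trace_mul_eq_zero {y : K} (h : ∀ x, Algebra.trace (ZMod p) K (x * y) = 0) :
    y = 0 :=
  (traceForm_nondegenerate (ZMod p) K).2 y h

theorem qPoly_add (s N : ℕ) (a : ℕ → K) (x y : K) :
    qPoly (p ^ s) N a (x + y) = qPoly (p ^ s) N a x + qPoly (p ^ s) N a y := by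
  simp only [qPoly, ← pow_mul, add_pow_prime_pow, mul_add, sum_add_distrib]

theorem qPolyAdjoint_add (s N : ℕ) (a : ℕ → K) (x y : K) :
    qPolyAdjoint (p ^ s) N a (x + y) =
      qPolyAdjoint (p ^ s) N a x + qPolyAdjoint (p ^ s) N a y := by
  simp only [qPolyAdjoint, ← pow_mul, add_pow_prime_pow, mul_add, sum_add_distrib]

theorem trace_qPoly_mul {s N : ℕ} (hN : Fintype.card K = (p ^ s) ^ N) (a : ℕ → K) (x y : K) :
    Algebra.trace (ZMod p) K (qPoly (p ^ s) N a x * y) =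
      Algebra.trace (ZMod p) K (x * qPolyAdjoint (p ^ s) N a y) := by
  simp only [qPoly, qPolyAdjoint, sum_mul, mul_sum, map_sum]
  refine sum_congr rfl fun i hi => ?_
  have hx : (x ^ (p ^ s) ^ i) ^ (p ^ s) ^ (N - i) = x := by
    rw [← pow_mul, ← pow_add, Nat.add_sub_cancel' (mem_range.1 hi).le, ← hN, FiniteField.pow_card]
  rw [← trace_pow_prime_pow (s * (N - i)), pow_mul, mul_pow, mul_pow, hx]
  congr 1
  ring

theorem injective_of_trace_mul_adjoint {F G : K →+ K}
    (hFG : ∀ x y, Algebra.trace (ZMod p) K (F x * y) = Algebra.trace (ZMod p) K (x * G y))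
    (hF : Function.Injective F) : Function.Injective G := by
  refine (injective_iff_map_eq_zero G).2 fun y hy =>
    eq_zero_of_trace_mul_eq_zero (p := p) fun x => ?_
  obtain ⟨w, rfl⟩ := Finite.injective_iff_surjective.1 hF x
  rw [hFG, hy, mul_zero, map_zero]

theorem exists_qPoly_eq_mul_iff {s N : ℕ} (hN : Fintype.card K = (p ^ s) ^ N) (a : ℕ → K)
    (z : K) : (∃ x, x ≠ 0 ∧ qPoly (p ^ s) N a x = z * x) ↔
      ∃ y, y ≠ 0 ∧ qPolyAdjoint (p ^ s) N a y = z * y := by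
  let F : K →+ K := .mk' (fun x => qPoly (p ^ s) N a x - z * x) fun x y => by
    rw [qPoly_add]; ring
  let G : K →+ K := .mk' (fun x => qPolyAdjoint (p ^ s) N a x - z * x) fun x y => by
    rw [qPolyAdjoint_add]; ring
  have hFG : ∀ x y, Algebra.trace (ZMod p) K (F x * y) = Algebra.trace (ZMod p) K (x * G y) := by
    intro x y
    simp only [F, G, AddMonoidHom.mk'_apply, sub_mul, mul_sub, map_sub, trace_qPoly_mul hN,
      mul_left_comm, mul_assoc]
  have hGF : ∀ x y, Algebra.trace (ZMod p) K (G x * y) = Algebra.trace (ZMod p) K (x * F y) := by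
    intro x y
    rw [mul_comm, ← hFG, mul_comm]
  have h := not_congr ⟨injective_of_trace_mul_adjoint hFG, injective_of_trace_mul_adjoint hGF⟩
  rw [F.not_injective_iff, G.not_injective_iff] at h
  simpa only [F, G, AddMonoidHom.mk'_apply, sub_eq_zero] using h
end

theorem stmt7_general (q n : ℕ) (hq : IsPrimePow q)
    (K : Type*) [Field K] [Fintype K] (hK : Nat.card K = q ^ (3 * n))
    (a : ℕ → K) :
    {z : K | ∃ x : K, x ≠ 0 ∧
        z = (∑ i ∈ Finset.range (3 * n), a i * x ^ q ^ i) / x} =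
    {z : K | ∃ x : K, x ≠ 0 ∧
        z = (∑ i ∈ Finset.range (3 * n),
              (a i) ^ q ^ (3 * n - i) * x ^ q ^ (3 * n - i)) / x} := by
  obtain ⟨p, s, hp, -, rfl⟩ := hq
  have : Fact p.Prime := ⟨hp.nat_prime⟩
  have hcard : Fintype.card K = (p ^ s) ^ (3 * n) := by rw [← Nat.card_eq_fintype_card, hK]
  have : CharP K p := charP_of_card_eq_prime_pow (hcard.trans (pow_mul ..).symm)
  let := ZMod.algebra K p
  ext z
  exact ((exists_ne_zero_eq_div_iff _ z).trans (exists_qPoly_eq_mul_iff hcard a z)).trans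
    (exists_ne_zero_eq_div_iff _ z).symm

/-- Lemma 3.6 of the paper: a q-polynomial map φ of GF(q^{3n}) and
its adjoint φ̄ with respect to the trace bilinear form have the property that
x ↦ φ(x)/x and x ↦ φ̄(x)/x have the same image on GF(q^{3n})*. -/
theorem stmt7 (q n : ℕ) (hq : IsPrimePow q) (hn : 1 ≤ n)
    (K : Type*) [Field K] [Fintype K] (hK : Nat.card K = q ^ (3 * n))
    (a : ℕ → K) :
    {z : K | ∃ x : K, x ≠ 0 ∧
        z = (∑ i ∈ Finset.range (3 * n), a i * x ^ q ^ i) / x} =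
    {z : K | ∃ x : K, x ≠ 0 ∧
        z = (∑ i ∈ Finset.range (3 * n),
              (a i) ^ q ^ (3 * n - i) * x ^ q ^ (3 * n - i)) / x} :=
  stmt7_general q n hq K hK a
end

section
/- Let n > 1 and q = 2. There exists b ∈ GF(2^{3n})* such that N_{2^{3n}/2^n}(b) ≠ 1 and b is not in the image of the function H(t) = (1 - t)/t^{2^{2n+1}-1} defined on GF(2^{3n})*. -/
/-!
Write `q = 2 ^ n`, `N x = x ^ (1 + q + q ^ 2)` and `e = 2 * q ^ 2 - 1`. Since
`e * (1 + q + q ^ 2) ≡ 1 + q + q ^ 2 [MOD q ^ 3 - 1]`, we get `N (H t) = N ((1 - t) / t)`, and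
`t ↦ (1 - t) / t` is injective on `Kˣ`. Hence the set `S` of `t ≠ 0` with `H t ≠ 0`, `N (H t) ≠ 1`
is no larger than the set `B` of `b ≠ 0` with `N b ≠ 1`. As `H` maps `S` into `B`, it suffices to
find a collision in `S`. For `c ≠ 1` the equation `H (c * t) = H t` is linear in `t`, and its
solution lies in `S` unless `c` is a root of a nonzero polynomial of degree `< q ^ 3`, obtained by
expanding the norms with the Frobenius `x ↦ x ^ q`.
-/

open Polynomial Finset

theorem Finset.exists_mem_notMem_image_of_card_le_of_not_injOn {α β : Type*} [DecidableEq β]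
    {s : Finset α} {t : Finset β} {f : α → β} (hst : #s ≤ #t) (hf : ¬ Set.InjOn f s) :
    ∃ b ∈ t, b ∉ s.image f :=
  exists_mem_notMem_of_card_lt_card <|
    (card_image_le.lt_of_ne (mt card_image_iff.mp hf)).trans_le hst

theorem pow_eq_one_of_eq_add_mul {M : Type*} [Monoid M] {x : M} {k m d : ℕ}
    (hk : x ^ k = 1) (hm : x ^ m = 1) (u v : ℤ) (hd : (d : ℤ) = k * u + m * v) : x ^ d = 1 := by
  rw [← orderOf_dvd_iff_pow_eq_one] at hk hm ⊢
  rw [← Int.natCast_dvd_natCast, hd]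
  exact ((Int.natCast_dvd_natCast.2 hk).mul_right u).add
    ((Int.natCast_dvd_natCast.2 hm).mul_right v)

theorem pow_seven_eq_one_of_pow_eq_one {M : Type*} [Monoid M] {x : M} {q : ℕ} (hq : 0 < q)
    (h3 : x ^ (q ^ 3 - 1) = 1) (h2 : x ^ (2 * q ^ 2 - 1) = 1) : x ^ 7 = 1 := by
  refine pow_eq_one_of_eq_add_mul h2 h3 (1 + 2 * q * (q + 2)) (-(4 * (q + 2))) ?_
  have : 1 ≤ q ^ 3 := Nat.one_le_pow _ _ hq
  have : 1 ≤ 2 * q ^ 2 := by have := Nat.one_le_pow 2 q hq; omega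
  push_cast [*]
  ring

theorem pow_sub_one_eq_one_of_pow_eq_one {M : Type*} [Monoid M] {x : M} {q : ℕ} (hq : Even q)
    (h3 : x ^ (q ^ 3 - 1) = 1) (h2 : x ^ (2 * q ^ 2 - 2) = 1) : x ^ (q - 1) = 1 := by
  obtain ⟨g, rfl⟩ := hq
  rcases Nat.eq_zero_or_pos g with rfl | hg
  · simp
  refine pow_eq_one_of_eq_add_mul h3 h2 (1 - 2 * g * (2 * g + 1)) (2 * g * g * (2 * g + 1)) ?_
  have : 1 ≤ (g + g) ^ 3 := Nat.one_le_pow _ _ (by omega)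
  have : 2 ≤ 2 * (g + g) ^ 2 := by nlinarith
  push_cast [*, show 1 ≤ g + g by omega]
  ring

theorem FiniteField.pow_eq_pow_of_modEq {K : Type*} [Field K] [Fintype K] {x : K} (hx : x ≠ 0)
    {i j : ℕ} (h : i ≡ j [MOD Fintype.card K - 1]) : x ^ i = x ^ j := by
  have hx1 := pow_card_sub_one_eq_one x hx
  have hfin : IsOfFinOrder x :=
    isOfFinOrder_iff_pow_eq_one.2 ⟨_, Nat.sub_pos_of_lt Fintype.one_lt_card, hx1⟩
  exact hfin.pow_eq_pow_iff_modEq.2 (h.of_dvd (orderOf_dvd_of_pow_eq_one hx1))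

theorem Polynomial.monic_X_pow_add_X_pow {R : Type*} [Semiring R] [Nontrivial R] {i j : ℕ}
    (h : j < i) : (X ^ i + X ^ j : R[X]).Monic :=
  monic_X_pow_add (by rw [degree_X_pow]; exact_mod_cast h)

theorem Polynomial.natDegree_X_pow_add_X_pow {R : Type*} [Semiring R] [Nontrivial R] {i j : ℕ}
    (h : j < i) : (X ^ i + X ^ j : R[X]).natDegree = i := by
  rw [natDegree_add_eq_left_of_natDegree_lt] <;> simp [h]

theorem add_pow_one_add_add_sq {K : Type*} [Field K] [CharP K 2] {n q : ℕ} (hq : q = 2 ^ n)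
    (x y : K) :
    (x + y) ^ (1 + q + q ^ 2) = (x + y) * (x ^ q + y ^ q) * (x ^ q ^ 2 + y ^ q ^ 2) := by
  have frob : ∀ x y : K, (x + y) ^ q = x ^ q + y ^ q := fun x y ↦ hq ▸ add_pow_char_pow x y 2 n
  have frob2 : (x + y) ^ q ^ 2 = x ^ q ^ 2 + y ^ q ^ 2 := by
    simp only [sq, pow_mul, frob]
  rw [pow_add, pow_add, pow_one, frob, frob2]

section CubicExtension

variable {K : Type*} [Field K] [Fintype K] {n q : ℕ}

def hMap (q : ℕ) (t : K) : K := (1 - t) / t ^ (2 * q ^ 2 - 1)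

theorem hMap_pow_eq_one_sub_div_pow (hK : Fintype.card K = q ^ 3) {t : K} (ht : t ≠ 0) :
    hMap q t ^ (1 + q + q ^ 2) = ((1 - t) / t) ^ (1 + q + q ^ 2) := by
  have hq : 1 ≤ q := Nat.pos_of_ne_zero (by rintro rfl; simp at hK)
  have hexp :
      (2 * q ^ 2 - 1) * (1 + q + q ^ 2) ≡ 1 * (1 + q + q ^ 2) [MOD Fintype.card K - 1] := by
    have : (2 * q ^ 2 - 1) * (1 + q + q ^ 2) =
        1 * (1 + q + q ^ 2) + (q ^ 3 - 1) * (2 * (q + 1)) := by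
      zify [Nat.one_le_pow 3 q hq, show 1 ≤ 2 * q ^ 2 by nlinarith]
      ring
    rw [hK, this]
    exact Nat.add_mul_mod_self_left _ _ _
  rw [hMap, div_pow, div_pow, ← pow_mul, FiniteField.pow_eq_pow_of_modEq ht hexp, one_mul]

theorem exists_monic_eval_eq_norm_sub_norm [CharP K 2] (hK : Fintype.card K = q ^ 3)
    (hq : q = 2 ^ n) (hq2 : 2 < q) :
    ∃ p : K[X], p.Monic ∧ p.natDegree = 3 * q ^ 2 + q ∧ ∀ c : K,
      p.eval c = (c ^ (2 * q ^ 2) + c) ^ (1 + q + q ^ 2) - (c ^ 2 + c) ^ (1 + q + q ^ 2) := by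
  have hqq : 2 * q < q ^ 2 := by nlinarith
  -- `p₂` and `p₁` expand the two norms by Frobenius, reduced with `c ^ q ^ 3 = c`.
  set p₁ : K[X] := (X ^ 2 + X ^ 1) * (X ^ (2 * q) + X ^ q) * (X ^ (2 * q ^ 2) + X ^ q ^ 2)
  set p₂ : K[X] := (X ^ (2 * q ^ 2) + X ^ 1) * (X ^ q + X ^ 2) * (X ^ q ^ 2 + X ^ (2 * q))
  have hp₁ : p₁.natDegree = 2 + 2 * q + 2 * q ^ 2 := by
    have h₁ := monic_X_pow_add_X_pow (R := K) (show 1 < 2 by norm_num)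
    have h₂ := monic_X_pow_add_X_pow (R := K) (show q < 2 * q by omega)
    have h₃ := monic_X_pow_add_X_pow (R := K) (show q ^ 2 < 2 * q ^ 2 by omega)
    rw [(h₁.mul h₂).natDegree_mul h₃, h₁.natDegree_mul h₂, natDegree_X_pow_add_X_pow (by omega),
      natDegree_X_pow_add_X_pow (by omega), natDegree_X_pow_add_X_pow (by omega)]
  have hp₂ : p₂.Monic ∧ p₂.natDegree = 3 * q ^ 2 + q := by
    have h₁ := monic_X_pow_add_X_pow (R := K) (show 1 < 2 * q ^ 2 by omega)
    have h₂ := monic_X_pow_add_X_pow (R := K) hq2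
    have h₃ := monic_X_pow_add_X_pow (R := K) hqq
    refine ⟨(h₁.mul h₂).mul h₃, ?_⟩
    rw [(h₁.mul h₂).natDegree_mul h₃, h₁.natDegree_mul h₂, natDegree_X_pow_add_X_pow (by omega),
      natDegree_X_pow_add_X_pow hq2, natDegree_X_pow_add_X_pow hqq]
    ring
  have hlt : p₁.natDegree < p₂.natDegree := by rw [hp₁, hp₂.2]; nlinarith
  refine ⟨p₂ - p₁, hp₂.1.sub_of_left (degree_lt_degree hlt),
    (natDegree_sub_eq_left_of_natDegree_lt hlt).trans hp₂.2, fun c ↦ ?_⟩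
  have hcard : ∀ k, c ^ (q ^ 3 * k) = c ^ k := fun k ↦ by
    rw [pow_mul, ← hK, FiniteField.pow_card]
  rw [add_pow_one_add_add_sq hq, add_pow_one_add_add_sq hq, ← pow_mul, ← pow_mul, ← pow_mul,
    ← pow_mul, show 2 * q ^ 2 * q = q ^ 3 * 2 by ring,
    show 2 * q ^ 2 * q ^ 2 = q ^ 3 * (2 * q) by ring, hcard, hcard, mul_comm 2 q,
    mul_comm 2 (q ^ 2)]
  simp only [p₁, p₂, eval_sub, eval_mul, eval_add, eval_pow, eval_X, pow_one]
  ring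

theorem exists_collision_parameter [CharP K 2] (hK : Fintype.card K = q ^ 3) (hq : q = 2 ^ n)
    (hq4 : 4 ≤ q) : ∃ c : K, c ≠ 0 ∧ c ^ (q - 1) ≠ 1 ∧ c ^ 7 ≠ 1 ∧
      (c ^ 2 + c) ^ (1 + q + q ^ 2) ≠ (c ^ (2 * q ^ 2) + c) ^ (1 + q + q ^ 2) := by
  obtain ⟨p, hp, hpdeg, hpeval⟩ := exists_monic_eval_eq_norm_sub_norm hK hq (by omega)
  have h₁ := monic_X_pow_sub_C (1 : K) (show q - 1 ≠ 0 by omega)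
  have h₂ := monic_X_pow_sub_C (1 : K) (show 7 ≠ 0 by norm_num)
  set Q : K[X] := X * p * (X ^ (q - 1) - C 1) * (X ^ 7 - C 1)
  have hQ : Q.Monic := ((monic_X.mul hp).mul h₁).mul h₂
  have hQdeg : Q.natDegree < Fintype.card K := by
    rw [((monic_X.mul hp).mul h₁).natDegree_mul h₂, (monic_X.mul hp).natDegree_mul h₁,
      monic_X.natDegree_mul hp, natDegree_X, hpdeg, natDegree_X_pow_sub_C, natDegree_X_pow_sub_C,
      hK]
    have : 4 * q ^ 2 ≤ q ^ 3 := by nlinarith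
    have : 4 * q ≤ q ^ 2 := by nlinarith
    omega
  obtain ⟨c, hc⟩ : ∃ c, Q.eval c ≠ 0 := by
    by_contra! h
    exact hQ.ne_zero (eq_zero_of_natDegree_lt_card_of_eval_eq_zero _ Function.injective_id h hQdeg)
  simp only [Q, eval_mul, eval_X, eval_sub, eval_pow, eval_C, hpeval, mul_ne_zero_iff,
    sub_ne_zero] at hc
  exact ⟨c, hc.1.1.1, hc.1.2, hc.2, hc.1.1.2.symm⟩

theorem exists_hMap_collision [CharP K 2] (hK : Fintype.card K = q ^ 3) (hq : q = 2 ^ n)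
    (hq4 : 4 ≤ q) : ∃ t c : K, t ≠ 0 ∧ c ≠ 0 ∧ c ≠ 1 ∧ hMap q (c * t) = hMap q t ∧
      hMap q t ≠ 0 ∧ hMap q t ^ (1 + q + q ^ 2) ≠ 1 := by
  obtain ⟨c, hc0, hcq, hc7, hcN⟩ := exists_collision_parameter hK hq hq4
  set e := 2 * q ^ 2 - 1 with he
  have hc1 : c ≠ 1 := by rintro rfl; simp at hc7
  have hcard : c ^ (q ^ 3 - 1) = 1 := hK ▸ FiniteField.pow_card_sub_one_eq_one c hc0
  have hce1 : c ^ e ≠ 1 := fun h ↦ hc7 (pow_seven_eq_one_of_pow_eq_one (by omega) hcard h)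
  have hcec : c ^ e ≠ c := by
    intro h
    have hq2 : Even q := hq ▸ (Nat.even_pow' (by rintro rfl; simp at hq; omega)).2 even_two
    refine hcq (pow_sub_one_eq_one_of_pow_eq_one hq2 hcard (mul_right_cancel₀ hc0 ?_))
    rw [← pow_succ, one_mul, ← h]
    have : 1 ≤ q ^ 2 := Nat.one_le_pow _ _ (by omega)
    congr 1
    omega
  -- `H (c * t) = H t` is the linear equation `t * (c ^ e - c) = c ^ e - 1`.
  set t := (c ^ e - 1) / (c ^ e - c)
  have hnum : c ^ e - 1 ≠ 0 := sub_ne_zero.2 hce1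
  have ht : t * (c ^ e - c) = c ^ e - 1 := div_mul_cancel₀ _ (sub_ne_zero.2 hcec)
  have ht0 : t ≠ 0 := div_ne_zero hnum (sub_ne_zero.2 hcec)
  have ht1 : t ≠ 1 := by
    intro h
    rw [h, one_mul] at ht
    exact hc1 (sub_right_inj.1 ht)
  refine ⟨t, c, ht0, hc0, hc1, ?_,
    div_ne_zero (sub_ne_zero.2 (Ne.symm ht1)) (pow_ne_zero _ ht0), ?_⟩
  · rw [hMap, hMap, div_eq_div_iff (pow_ne_zero _ (mul_ne_zero hc0 ht0)) (pow_ne_zero _ ht0),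
      mul_pow]
    linear_combination t ^ e * ht
  · have hφ : (1 - t) / t = (1 - c) / (c ^ e - 1) := by
      rw [div_eq_div_iff ht0 hnum]
      linear_combination -ht
    rw [hMap_pow_eq_one_sub_div_pow hK ht0, hφ, div_pow, Ne, div_eq_one_iff_eq (pow_ne_zero _ hnum)]
    intro h
    refine hcN ?_
    have h₁ : c ^ 2 + c = c * (1 - c) := by
      rw [mul_sub, mul_one, ← sq, CharTwo.sub_eq_add, add_comm]
    have h₂ : c ^ (2 * q ^ 2) + c = c * (c ^ e - 1) := by
      rw [mul_sub, mul_one, ← pow_succ', he, Nat.sub_add_cancel (by nlinarith),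
        CharTwo.sub_eq_add]
    rw [h₁, h₂, mul_pow, mul_pow, h]

theorem exists_notMem_range_hMap [CharP K 2] (hK : Fintype.card K = q ^ 3) (hq : q = 2 ^ n)
    (hq4 : 4 ≤ q) :
    ∃ b : K, b ≠ 0 ∧ b ^ (1 + q + q ^ 2) ≠ 1 ∧ ∀ t : K, t ≠ 0 → hMap q t ≠ b := by
  classical
  set B : Finset K := {b | b ≠ 0 ∧ b ^ (1 + q + q ^ 2) ≠ 1}
  set S : Finset K := {t | t ≠ 0 ∧ hMap q t ∈ B}
  have hSB : #S ≤ #B := by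
    refine card_le_card_of_injOn (fun t ↦ (1 - t) / t) (fun t ht ↦ ?_) (fun s hs t ht hst ↦ ?_)
    · simp only [S, B, coe_filter, mem_filter, mem_univ, true_and, Set.mem_ofPred_eq] at ht ⊢
      obtain ⟨ht0, hH0, hHN⟩ := ht
      exact ⟨div_ne_zero (div_ne_zero_iff.1 hH0).1 ht0, hMap_pow_eq_one_sub_div_pow hK ht0 ▸ hHN⟩
    · simp only [S, coe_filter, mem_univ, true_and, Set.mem_ofPred_eq] at hs ht
      rw [div_eq_div_iff hs.1 ht.1] at hst
      linear_combination -hst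
  obtain ⟨t, c, ht0, hc0, hc1, hct, hH0, hHN⟩ := exists_hMap_collision hK hq hq4
  have hHB : hMap q t ∈ B := by simp [B, hH0, hHN]
  have hnotinj : ¬ Set.InjOn (hMap q) S := fun hinj ↦ hc1 <| mul_right_cancel₀ ht0 <|
    (hinj (by simp [S, mul_ne_zero hc0 ht0, hct, hHB]) (by simp [S, ht0, hHB]) hct).trans
      (one_mul t).symm
  obtain ⟨b, hbB, hbS⟩ := exists_mem_notMem_image_of_card_le_of_not_injOn hSB hnotinj
  obtain ⟨hb0, hbN⟩ := (mem_filter.1 hbB).2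
  exact ⟨b, hb0, hbN, fun t ht htb ↦ hbS (mem_image.2 ⟨t, by simp [S, ht, htb, hbB], htb⟩)⟩

end CubicExtension

/-- Lemma 3.8 of the paper: there is b ∈ GF(2^{3n})* of norm ≠ 1
over GF(2^n) which is not in the image of H(t) = (1-t)/t^{2^{2n+1}-1}. -/
theorem stmt10 (n : ℕ) (hn : 1 < n)
    (K : Type*) [Field K] [Fintype K] (hK : Nat.card K = 2 ^ (3 * n)) :
    ∃ b : K, b ≠ 0 ∧ b ^ (1 + 2 ^ n + 2 ^ (2 * n)) ≠ 1 ∧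
      ∀ t : K, t ≠ 0 → (1 - t) / t ^ (2 ^ (2 * n + 1) - 1) ≠ b := by
  rw [Nat.card_eq_fintype_card] at hK
  have : CharP K 2 := charP_of_card_eq_prime_pow hK
  have hcard : Fintype.card K = (2 ^ n) ^ 3 := by rw [hK, ← pow_mul, mul_comm]
  have h2n : 2 ^ (2 * n) = (2 ^ n) ^ 2 := by rw [mul_comm, pow_mul]
  rw [h2n, pow_succ 2 (2 * n), h2n, mul_comm _ 2]
  exact exists_notMem_range_hMap hcard rfl (Nat.pow_le_pow_right two_pos hn)
end

section
/- Let V = V_1 ⊕ ... ⊕ V_m be a direct sum decomposition of a GF(q^t)-vector space V, with dim V_i = s_i ≥ 2. For each i, let U_i be an F_q-subspace of V_i such that L_{U_i} is a scattered F_q-linear set of PG(V_i, GF(q^t)). Then W = U_1 ⊕ ... ⊕ U_m defines a scattered F_q-linear set L_W of PG(V, GF(q^t)). -/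
def IsScattered {K V : Type*} [DivisionRing K] [AddCommGroup V] [Module K V]
    (F : Subfield K) (U : Set V) : Prop :=
  ∀ u ∈ U, u ≠ 0 → ∀ v ∈ U, v ≠ 0 → ∀ l : K, v = l • u → l ∈ F

theorem IsScattered.pi {K ι : Type*} [DivisionRing K] {V : ι → Type*}
    [∀ i, AddCommGroup (V i)] [∀ i, Module K (V i)] {F : Subfield K} {U : ∀ i, Set (V i)}
    (hU : ∀ i, IsScattered F (U i)) : IsScattered F {w : ∀ i, V i | ∀ i, w i ∈ U i} := by
  intro w hw hw0 w' hw' hw'0 l hl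
  obtain ⟨i, hi⟩ := Function.ne_iff.mp hw0
  have hl0 : l ≠ 0 := by
    rintro rfl
    exact hw'0 (by rw [hl, zero_smul])
  have hwi' : w' i = l • w i := congrFun hl i
  exact hU i (w i) (hw i) hi (w' i) (hw' i) (hwi' ▸ smul_ne_zero hl0 hi) l hwi'

theorem stmt13_general (m : ℕ)
    (K : Type*) [Field K]
    (Fq : Subfield K)
    (V : Fin m → Type*) [∀ i, AddCommGroup (V i)] [∀ i, Module K (V i)]
    (U : ∀ i, Set (V i))
    (hscatt : ∀ i, ∀ u ∈ U i, u ≠ 0 → ∀ v ∈ U i, v ≠ 0 →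
      ∀ l : K, v = l • u → l ∈ Fq) :
    ∀ w ∈ {w : ∀ i, V i | ∀ i, w i ∈ U i}, w ≠ 0 →
      ∀ w' ∈ {w : ∀ i, V i | ∀ i, w i ∈ U i}, w' ≠ 0 →
        ∀ l : K, w' = l • w → l ∈ Fq :=
  IsScattered.pi hscatt

/-- Theorem 5.1 of the paper, first part: if V = V₁ ⊕ ... ⊕ V_m
over GF(q^t) and each L_{U_i} is scattered, then W = U₁ ⊕ ... ⊕ U_m defines a
scattered F_q-linear set of PG(V, GF(q^t)).  The direct sum is modelled as the
product Π i, V i. -/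
theorem stmt13 (q t m : ℕ) (hq : IsPrimePow q) (ht : 1 ≤ t)
    (K : Type*) [Field K] [Fintype K] (hK : Nat.card K = q ^ t)
    (Fq : Subfield K) (hFq : Nat.card Fq = q)
    (V : Fin m → Type*) [∀ i, AddCommGroup (V i)] [∀ i, Module K (V i)]
    (s : Fin m → ℕ) (hs : ∀ i, 2 ≤ s i)
    (hdim : ∀ i, Module.finrank K (V i) = s i)
    (U : ∀ i, Set (V i))
    (hU0 : ∀ i, (0 : V i) ∈ U i)
    (hUadd : ∀ i, ∀ u ∈ U i, ∀ v ∈ U i, u + v ∈ U i)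
    (hUsmul : ∀ i, ∀ c ∈ Fq, ∀ u ∈ U i, (c : K) • u ∈ U i)
    (hscatt : ∀ i, ∀ u ∈ U i, u ≠ 0 → ∀ v ∈ U i, v ≠ 0 →
      ∀ l : K, v = l • u → l ∈ Fq) :
    ∀ w ∈ {w : ∀ i, V i | ∀ i, w i ∈ U i}, w ≠ 0 →
      ∀ w' ∈ {w : ∀ i, V i | ∀ i, w i ∈ U i}, w' ≠ 0 →
        ∀ l : K, w' = l • w → l ∈ Fq :=
  stmt13_general m K Fq V U hscatt
end

section
/- Let q = 2^t with t > 1, and let G be an additive subgroup of GF(q)^r. The point set K_G = { P_v : v ∈ G } in AG(r, q) is a cap (no three points collinear) if and only if any two distinct nonzero vectors of G are GF(q)-linearly independent. -/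
/-! Points `a, b, c` are collinear exactly when `b - a` and `c - a` are linearly dependent. Since
`G` is a group, the differences `b - a, c - a` of three distinct points of `G` are two distinct
nonzero vectors of `G`, and conversely any two such vectors `u, v` arise from the points `0, u, v`. -/

theorem collinear_iff_not_linearIndependent_vsub {k V P : Type*} [Field k] [AddCommGroup V]
    [Module k V] [AddTorsor V P] (a b c : P) :
    Collinear k ({a, b, c} : Set P) ↔ ¬LinearIndependent k ![b -ᵥ a, c -ᵥ a] := by
  rcases eq_or_ne a b with rfl | hab
  · simpa [collinear_pair] using fun h => h.ne_zero 0 (by simp)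
  rw [LinearIndependent.pair_iff' (vsub_ne_zero.2 hab.symm), not_forall_not,
    ← vadd_left_mem_affineSpan_pair, vsub_vadd]
  refine ⟨fun h => h.mem_affineSpan_of_mem_of_ne (by simp) (by simp) (by simp) hab, fun h => ?_⟩
  rw [Set.pair_comm, Set.insert_comm]
  exact collinear_insert_of_mem_affineSpan_pair h

theorem stmt15_general (r : ℕ)
    (K : Type*) [Field K]
    (G : AddSubgroup (Fin r → K)) :
    (∀ a ∈ G, ∀ b ∈ G, ∀ c ∈ G, a ≠ b → b ≠ c → a ≠ c →
        ¬ Collinear K ({a, b, c} : Set (Fin r → K))) ↔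
    (∀ u ∈ G, ∀ v ∈ G, u ≠ 0 → v ≠ 0 → u ≠ v → LinearIndependent K ![u, v]) := by
  simp only [collinear_iff_not_linearIndependent_vsub, not_not, vsub_eq_sub]
  constructor
  · intro hcap u hu v hv hu0 hv0 huv
    simpa using hcap 0 G.zero_mem u hu v hv hu0.symm huv hv0.symm
  · intro hind a ha b hb c hc hab hbc hac
    exact hind _ (G.sub_mem hb ha) _ (G.sub_mem hc ha) (sub_ne_zero.2 hab.symm)
      (sub_ne_zero.2 hac.symm) (sub_left_injective.ne hbc)

/-- characterization of translation caps, \cite[Lemma 2.1]{Giulietti2007}: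
for q = 2^t and an additive subgroup G of GF(q)^r, the point set K_G is a cap of
AG(r,q) iff any two distinct nonzero vectors of G are GF(q)-linearly independent. -/
theorem stmt15 (t r : ℕ) (ht : 1 < t)
    (K : Type*) [Field K] [Fintype K] (hK : Nat.card K = 2 ^ t)
    (G : AddSubgroup (Fin r → K)) :
    (∀ a ∈ G, ∀ b ∈ G, ∀ c ∈ G, a ≠ b → b ≠ c → a ≠ c →
        ¬ Collinear K ({a, b, c} : Set (Fin r → K))) ↔
    (∀ u ∈ G, ∀ v ∈ G, u ≠ 0 → v ≠ 0 → u ≠ v → LinearIndependent K ![u, v]) :=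
  stmt15_general r K G
end

section
/- Let t > 1. An F_2-subspace U of GF(2^t)^r defines a scattered F_2-linear set L_U in PG(r-1, 2^t) if and only if K_U = { P_v : v ∈ U } is a translation cap in AG(r, 2^t). -/
/-!
Translating by `a` turns three distinct points `a, b, c` of an additive subgroup `U` into the
distinct nonzero vectors `b - a, c - a` of `U`, and the points are collinear exactly when these
vectors are proportional. Conversely, `0, u, v` are three points of `U`, collinear exactly when
`v` is a multiple of `u`.
-/

theorem collinear_triple_iff_exists_vsub_eq_smul {k V P : Type*} [DivisionRing k]
    [AddCommGroup V] [Module k V] [AddTorsor V P] {p₁ p₂ p₃ : P} (h : p₁ ≠ p₂) :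
    Collinear k ({p₁, p₂, p₃} : Set P) ↔ ∃ r : k, p₃ -ᵥ p₁ = r • (p₂ -ᵥ p₁) := by
  have hline : Collinear k ({p₁, p₂, p₃} : Set P) ↔ p₃ ∈ line[k, p₁, p₂] := by
    refine ⟨fun hcol => hcol.mem_affineSpan_of_mem_of_ne (by simp) (by simp) (by simp) h,
      fun hp₃ => ?_⟩
    rw [Set.pair_comm, Set.insert_comm]
    exact collinear_insert_of_mem_affineSpan_pair hp₃
  rw [hline, ← vsub_vadd p₃ p₁, vadd_left_mem_affineSpan_pair]
  simp only [vsub_vadd, eq_comm]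

theorem AddSubgroup.forall_ne_smul_iff_forall_not_collinear {K V : Type*} [DivisionRing K]
    [AddCommGroup V] [Module K V] (U : AddSubgroup V) :
    (∀ u ∈ U, ∀ v ∈ U, u ≠ 0 → v ≠ 0 → u ≠ v → ∀ l : K, v ≠ l • u) ↔
    (∀ a ∈ U, ∀ b ∈ U, ∀ c ∈ U, a ≠ b → b ≠ c → a ≠ c →
        ¬ Collinear K ({a, b, c} : Set V)) := by
  constructor
  · intro h a ha b hb c hc hab hbc hac hcol
    obtain ⟨l, hl⟩ := (collinear_triple_iff_exists_vsub_eq_smul hab).1 hcol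
    exact h (b - a) (U.sub_mem hb ha) (c - a) (U.sub_mem hc ha) (sub_ne_zero.2 hab.symm)
      (sub_ne_zero.2 hac.symm) ((sub_left_injective (b := a)).ne hbc) l hl
  · intro h u hu v hv hu0 hv0 huv l hvl
    refine h 0 U.zero_mem u hu v hv hu0.symm huv hv0.symm ?_
    exact (collinear_triple_iff_exists_vsub_eq_smul hu0.symm).2 ⟨l, by simpa using hvl⟩

theorem stmt16_general (r : ℕ)
    (K : Type*) [Field K]
    (U : AddSubgroup (Fin r → K)) :
    (∀ u ∈ U, ∀ v ∈ U, u ≠ 0 → v ≠ 0 → u ≠ v → ∀ l : K, v ≠ l • u) ↔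
    (∀ a ∈ U, ∀ b ∈ U, ∀ c ∈ U, a ≠ b → b ≠ c → a ≠ c →
        ¬ Collinear K ({a, b, c} : Set (Fin r → K))) :=
  U.forall_ne_smul_iff_forall_not_collinear

/-- Proposition 5.4 of the paper: an F_2-subspace U of GF(2^t)^r
defines a scattered F_2-linear set (distinct nonzero vectors span distinct lines)
iff K_U is a translation cap in AG(r, 2^t) (no three points collinear). -/
theorem stmt16 (t r : ℕ) (ht : 1 < t)
    (K : Type*) [Field K] [Fintype K] (hK : Nat.card K = 2 ^ t)
    (U : AddSubgroup (Fin r → K)) :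
    (∀ u ∈ U, ∀ v ∈ U, u ≠ 0 → v ≠ 0 → u ≠ v → ∀ l : K, v ≠ l • u) ↔
    (∀ a ∈ U, ∀ b ∈ U, ∀ c ∈ U, a ≠ b → b ≠ c → a ≠ c →
        ¬ Collinear K ({a, b, c} : Set (Fin r → K))) :=
  stmt16_general r K U
end
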